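/- Let Ĥ_q be the universal DAHA of type (C₁∨, C₁) with X = t₃t₀, Y = t₀t₁, Tᵢ = tᵢ + tᵢ⁻¹. Then q(qYX − q⁻¹XY) = qT₂t₀ + T₃t₁ + q⁻¹T₀t₂ + T₁t₃ − q⁻¹T₀T₂ − T₁T₃ holds in Ĥ_q. -/
import Mathlib


noncomputable section

open FreeAlgebra

/-- Defining relations of the universal DAHA of type `(C₁∨, C₁)`.
Generators: `(i, false)` is `tᵢ`, `(i, true)` is `tᵢ⁻¹`. -/
inductive DAHARel (F : Type*) [Field F] (q : F) :
    FreeAlgebra F (Fin 4 × Bool) → FreeAlgebra F (Fin 4 × Bool) → Prop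
  | invRight (i : Fin 4) : DAHARel F q (ι F (i, false) * ι F (i, true)) 1
  | invLeft (i : Fin 4) : DAHARel F q (ι F (i, true) * ι F (i, false)) 1
  | central (i : Fin 4) (g : Fin 4 × Bool) :
      DAHARel F q ((ι F (i, false) + ι F (i, true)) * ι F g)
        (ι F g * (ι F (i, false) + ι F (i, true)))
  | prodRel : DAHARel F q
      (ι F ((0 : Fin 4), false) * ι F ((1 : Fin 4), false) * ι F ((2 : Fin 4), false) *
        ι F ((3 : Fin 4), false))
      (algebraMap F (FreeAlgebra F (Fin 4 × Bool)) q⁻¹)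

/-- The universal DAHA of type `(C₁∨, C₁)`. -/
abbrev DAHA (F : Type*) [Field F] (q : F) := RingQuot (DAHARel F q)

/-- The generator `tᵢ` of the universal DAHA. -/
def DAHA.t {F : Type*} [Field F] (q : F) (i : Fin 4) : DAHA F q :=
  RingQuot.mkAlgHom F (DAHARel F q) (ι F (i, false))

/-- The generator `tᵢ⁻¹` of the universal DAHA. -/
def DAHA.tInv {F : Type*} [Field F] (q : F) (i : Fin 4) : DAHA F q :=
  RingQuot.mkAlgHom F (DAHARel F q) (ι F (i, true))

/-- `X = t₃ t₀`. -/
def DAHA.X {F : Type*} [Field F] (q : F) : DAHA F q := DAHA.t q 3 * DAHA.t q 0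

/-- `X⁻¹ = t₀⁻¹ t₃⁻¹`. -/
def DAHA.Xinv {F : Type*} [Field F] (q : F) : DAHA F q := DAHA.tInv q 0 * DAHA.tInv q 3

/-- `Y = t₀ t₁`. -/
def DAHA.Y {F : Type*} [Field F] (q : F) : DAHA F q := DAHA.t q 0 * DAHA.t q 1

/-- `Y⁻¹ = t₁⁻¹ t₀⁻¹`. -/
def DAHA.Yinv {F : Type*} [Field F] (q : F) : DAHA F q := DAHA.tInv q 1 * DAHA.tInv q 0

/-- `Tᵢ = tᵢ + tᵢ⁻¹`. -/
def DAHA.T {F : Type*} [Field F] (q : F) (i : Fin 4) : DAHA F q := DAHA.t q i + DAHA.tInv q i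

section Aux

variable {F : Type*} [Field F] (q : F)

private lemma daha_t_tInv (i : Fin 4) : DAHA.t q i * DAHA.tInv q i = 1 := by
  have h := RingQuot.mkAlgHom_rel F (DAHARel.invRight (F := F) (q := q) i)
  simpa [DAHA.t, DAHA.tInv, map_mul] using h

private lemma daha_tInv_t (i : Fin 4) : DAHA.tInv q i * DAHA.t q i = 1 := by
  have h := RingQuot.mkAlgHom_rel F (DAHARel.invLeft (F := F) (q := q) i)
  simpa [DAHA.t, DAHA.tInv, map_mul] using h

private lemma t_tInv_cancel (i : Fin 4) (x : DAHA F q) :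
    DAHA.t q i * (DAHA.tInv q i * x) = x := by
  rw [← mul_assoc, daha_t_tInv, one_mul]

private lemma tInv_t_cancel (i : Fin 4) (x : DAHA F q) :
    DAHA.tInv q i * (DAHA.t q i * x) = x := by
  rw [← mul_assoc, daha_tInv_t, one_mul]

private lemma daha_central (i : Fin 4) (g : Fin 4 × Bool) :
    (DAHA.t q i + DAHA.tInv q i) * RingQuot.mkAlgHom F (DAHARel F q) (ι F g)
      = RingQuot.mkAlgHom F (DAHARel F q) (ι F g) * (DAHA.t q i + DAHA.tInv q i) := by
  have h := RingQuot.mkAlgHom_rel F (DAHARel.central (F := F) (q := q) i g)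
  simpa [DAHA.t, DAHA.tInv, map_mul, map_add] using h

private lemma daha_prod :
    DAHA.t q 0 * (DAHA.t q 1 * (DAHA.t q 2 * DAHA.t q 3)) = q⁻¹ • (1 : DAHA F q) := by
  have h := RingQuot.mkAlgHom_rel F (DAHARel.prodRel (F := F) (q := q))
  simpa [DAHA.t, map_mul, mul_assoc, Algebra.algebraMap_eq_smul_one] using h

private lemma daha_cyc :
    DAHA.t q 1 * (DAHA.t q 2 * (DAHA.t q 3 * DAHA.t q 0)) = q⁻¹ • (1 : DAHA F q) := by
  have h1 : DAHA.t q 0 * (DAHA.t q 1 * (DAHA.t q 2 * (DAHA.t q 3 * DAHA.t q 0)))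
      = (q⁻¹ • (1 : DAHA F q)) * DAHA.t q 0 := by
    rw [← daha_prod q]; simp only [mul_assoc]
  calc DAHA.t q 1 * (DAHA.t q 2 * (DAHA.t q 3 * DAHA.t q 0))
      = DAHA.tInv q 0 * (DAHA.t q 0 *
          (DAHA.t q 1 * (DAHA.t q 2 * (DAHA.t q 3 * DAHA.t q 0)))) := by
        rw [tInv_t_cancel]
    _ = DAHA.tInv q 0 * ((q⁻¹ • (1 : DAHA F q)) * DAHA.t q 0) := by rw [h1]
    _ = q⁻¹ • (1 : DAHA F q) := by
        simp [mul_smul_comm, smul_mul_assoc, daha_tInv_t]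

private lemma daha_da :
    DAHA.t q 3 * DAHA.t q 0 = q⁻¹ • (DAHA.tInv q 2 * DAHA.tInv q 1) := by
  have h : DAHA.tInv q 2 * (DAHA.tInv q 1 *
      (DAHA.t q 1 * (DAHA.t q 2 * (DAHA.t q 3 * DAHA.t q 0))))
      = DAHA.t q 3 * DAHA.t q 0 := by
    rw [tInv_t_cancel, tInv_t_cancel]
  rw [daha_cyc] at h
  simpa [mul_smul_comm] using h.symm

private lemma daha_bc :
    DAHA.t q 1 * DAHA.t q 2 = q⁻¹ • (DAHA.tInv q 0 * DAHA.tInv q 3) := by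
  have h : (DAHA.t q 1 * (DAHA.t q 2 * (DAHA.t q 3 * DAHA.t q 0))) *
      (DAHA.tInv q 0 * DAHA.tInv q 3) = DAHA.t q 1 * DAHA.t q 2 := by
    simp only [mul_assoc]
    rw [t_tInv_cancel, daha_t_tInv, mul_one]
  rw [daha_cyc] at h
  simpa [smul_mul_assoc] using h.symm

private lemma daha_cd :
    DAHA.t q 2 * DAHA.t q 3 = q⁻¹ • (DAHA.tInv q 1 * DAHA.tInv q 0) := by
  have h : DAHA.tInv q 1 * (DAHA.tInv q 0 *
      (DAHA.t q 0 * (DAHA.t q 1 * (DAHA.t q 2 * DAHA.t q 3))))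
      = DAHA.t q 2 * DAHA.t q 3 := by
    rw [tInv_t_cancel, tInv_t_cancel]
  rw [daha_prod] at h
  simpa [mul_smul_comm] using h.symm

end Aux

section Key

variable {F : Type*} [Field F] (q : F)

private lemma central_t (i j : Fin 4) :
    (DAHA.t q i + DAHA.tInv q i) * DAHA.t q j
      = DAHA.t q j * (DAHA.t q i + DAHA.tInv q i) :=
  daha_central q i (j, false)

private lemma central_tInv (i j : Fin 4) :
    (DAHA.t q i + DAHA.tInv q i) * DAHA.tInv q j
      = DAHA.tInv q j * (DAHA.t q i + DAHA.tInv q i) :=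
  daha_central q i (j, true)

private lemma key1 :
    (DAHA.t q 0 * DAHA.t q 1) * (DAHA.t q 3 * DAHA.t q 0)
      = q⁻¹ • ((DAHA.t q 2 + DAHA.tInv q 2) * DAHA.t q 0)
        - (q⁻¹ * q⁻¹) • (DAHA.tInv q 3 * DAHA.tInv q 1) := by
  have hc' : DAHA.tInv q 2 * DAHA.tInv q 1
      = (DAHA.t q 2 + DAHA.tInv q 2) * DAHA.tInv q 1 - DAHA.t q 2 * DAHA.tInv q 1 := by
    rw [add_mul]; abel
  have h1 : DAHA.t q 1 * (DAHA.tInv q 2 * DAHA.tInv q 1)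
      = (DAHA.t q 2 + DAHA.tInv q 2)
        - q⁻¹ • (DAHA.tInv q 0 * (DAHA.tInv q 3 * DAHA.tInv q 1)) := by
    rw [hc', mul_sub, central_tInv, t_tInv_cancel, ← mul_assoc, daha_bc,
      smul_mul_assoc, mul_assoc]
  calc (DAHA.t q 0 * DAHA.t q 1) * (DAHA.t q 3 * DAHA.t q 0)
      = q⁻¹ • (DAHA.t q 0 * (DAHA.t q 1 * (DAHA.tInv q 2 * DAHA.tInv q 1))) := by
        rw [daha_da, mul_smul_comm, mul_assoc]
    _ = q⁻¹ • ((DAHA.t q 2 + DAHA.tInv q 2) * DAHA.t q 0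
          - q⁻¹ • (DAHA.tInv q 3 * DAHA.tInv q 1)) := by
        rw [h1, mul_sub, mul_smul_comm, t_tInv_cancel, ← central_t]
    _ = q⁻¹ • ((DAHA.t q 2 + DAHA.tInv q 2) * DAHA.t q 0)
          - (q⁻¹ * q⁻¹) • (DAHA.tInv q 3 * DAHA.tInv q 1) := by
        rw [smul_sub, smul_smul]

private lemma key2 (hq0 : q ≠ 0) :
    (DAHA.t q 3 * DAHA.t q 0) * (DAHA.t q 0 * DAHA.t q 1)
      = q⁻¹ • ((DAHA.t q 0 + DAHA.tInv q 0) * DAHA.tInv q 2)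
        - DAHA.t q 3 * DAHA.t q 1 := by
  have hba : DAHA.tInv q 1 * DAHA.tInv q 0 = q • (DAHA.t q 2 * DAHA.t q 3) := by
    rw [daha_cd, smul_smul, mul_inv_cancel₀ hq0, one_smul]
  have ha : DAHA.t q 0 * DAHA.t q 1
      = (DAHA.t q 0 + DAHA.tInv q 0) * DAHA.t q 1 - DAHA.tInv q 0 * DAHA.t q 1 := by
    rw [add_mul]; abel
  have h1 : DAHA.tInv q 1 * (DAHA.t q 0 * DAHA.t q 1)
      = (DAHA.t q 0 + DAHA.tInv q 0)
        - q • (DAHA.t q 2 * (DAHA.t q 3 * DAHA.t q 1)) := by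
    rw [ha, mul_sub, central_t, tInv_t_cancel, ← mul_assoc, hba, smul_mul_assoc, mul_assoc]
  calc (DAHA.t q 3 * DAHA.t q 0) * (DAHA.t q 0 * DAHA.t q 1)
      = q⁻¹ • (DAHA.tInv q 2 * (DAHA.tInv q 1 * (DAHA.t q 0 * DAHA.t q 1))) := by
        rw [daha_da, smul_mul_assoc, mul_assoc]
    _ = q⁻¹ • ((DAHA.t q 0 + DAHA.tInv q 0) * DAHA.tInv q 2
          - q • (DAHA.t q 3 * DAHA.t q 1)) := by
        rw [h1, mul_sub, mul_smul_comm, tInv_t_cancel, ← central_tInv]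
    _ = q⁻¹ • ((DAHA.t q 0 + DAHA.tInv q 0) * DAHA.tInv q 2)
          - DAHA.t q 3 * DAHA.t q 1 := by
        rw [smul_sub, smul_smul, inv_mul_cancel₀ hq0, one_smul]

end Key

/-- In `Ĥ_q`:
`q(qYX - q⁻¹XY) = qT₂t₀ + T₃t₁ + q⁻¹T₀t₂ + T₁t₃ - q⁻¹T₀T₂ - T₁T₃`. -/
theorem stmt_12 (F : Type*) [Field F] (q : F) (hq0 : q ≠ 0) (hq4 : q ^ 4 ≠ 1) :
    q • (q • (DAHA.Y q * DAHA.X q) - q⁻¹ • (DAHA.X q * DAHA.Y q)) =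
      q • (DAHA.T q 2 * DAHA.t q 0) + DAHA.T q 3 * DAHA.t q 1 +
        q⁻¹ • (DAHA.T q 0 * DAHA.t q 2) + DAHA.T q 1 * DAHA.t q 3 -
        q⁻¹ • (DAHA.T q 0 * DAHA.T q 2) - DAHA.T q 1 * DAHA.T q 3 := by
  have hTT : (DAHA.t q 1 + DAHA.tInv q 1) * (DAHA.t q 3 + DAHA.tInv q 3)
      = (DAHA.t q 1 + DAHA.tInv q 1) * DAHA.t q 3
        + DAHA.tInv q 3 * (DAHA.t q 1 + DAHA.tInv q 1) := by
    rw [mul_add, central_tInv]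
  simp only [DAHA.X, DAHA.Y, DAHA.T]
  rw [key1, key2 q hq0, hTT]
  simp only [smul_sub, smul_smul, ← mul_assoc, mul_inv_cancel_right₀ hq0,
    mul_inv_cancel₀ hq0, one_mul, one_smul]
  simp only [mul_add, add_mul]
  module
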